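/- Let A and B be types and P : A → B → SP. If there is a realiser r : Cr' (∀(A, fun x => ∃(B, fun y => P x y))) such that MR' (∀(A, fun x => ∃(B, fun y => P x y))) r is inhabited, then there exists a function f : A → B such that Tp (P x (f x)) is inhabited for every x : A. -/
import Mathlib

universe u

/-- Simple propositions. -/
inductive SP : Type 1 where
  | atom : Type → SP
  | bot  : SP
  | and  : SP → SP → SP
  | or   : SP → SP → SP
  | imp  : SP → SP → SP
  | all  : (A : Type) → (A → SP) → SP
  | ex   : (A : Type) → (A → SP) → SP

/-- The standard (homomorphic) translation into types. -/
def Tp : SP → Type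
  | .atom A  => A
  | .bot     => Empty
  | .and A B => Tp A × Tp B
  | .or A B  => Tp A ⊕ Tp B
  | .imp A B => Tp A → Tp B
  | .all A P => ∀ x : A, Tp (P x)
  | .ex A P  => Σ x : A, Tp (P x)

/-- The modified crude type of potential realisers (never empty in the ∃ case). -/
def Cr' : SP → Type
  | .atom _  => Unit
  | .bot     => Unit
  | .and A B => Cr' A × Cr' B
  | .or A B  => Cr' A ⊕ Cr' B
  | .imp A B => Cr' A → Cr' B
  | .all A P => ∀ x : A, Cr' (P x)
  | .ex A P  => Unit ⊕ Σ x : A, Cr' (P x)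

/-- Modified realisability (with truth) for the modified crude types. -/
def MR' : (S : SP) → Cr' S → Type
  | .atom A, _  => A
  | .bot, _     => Empty
  | .and A B, r => MR' A r.1 × MR' B r.2
  | .or A B, r  =>
      match r with
      | .inl s => MR' A s
      | .inr t => MR' B t
  | .imp A B, r => (Tp A → Tp B) × (∀ s : Cr' A, MR' A s → MR' B (r s))
  | .all A P, r => ∀ x : A, MR' (P x) (r x)
  | .ex A P, r  =>
      match r with
      | .inl _ => Empty
      | .inr t => MR' (P t.1) t.2

/-- The sequent `A ⊢ B` is MR'-realised. -/
def MRrealised' (A B : SP) : Prop :=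
  ∃ r : Cr' (SP.imp A B), Nonempty (MR' (SP.imp A B) r)

/-- MR' implies truth. -/
def mrTp : (S : SP) → (s : Cr' S) → MR' S s → Tp S
  | .atom _, _, m => m
  | .bot, _, m => m
  | .and A B, s, m => (mrTp A s.1 m.1, mrTp B s.2 m.2)
  | .or A B, .inl s, m => Sum.inl (mrTp A s m)
  | .or A B, .inr s, m => Sum.inr (mrTp B s m)
  | .imp _ _, _, m => m.1
  | .all A P, s, m => fun x => mrTp (P x) (s x) (m x)
  | .ex A P, .inl _, m => m.elim
  | .ex A P, .inr t, m => ⟨t.1, mrTp (P t.1) t.2 m⟩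

/-- Extract a witness from a realiser of an existential. -/
def exWit {B : Type} {Q : B → SP} : (c : Cr' (SP.ex B Q)) → MR' (SP.ex B Q) c → Σ y : B, Tp (Q y)
  | .inl _, m => m.elim
  | .inr t, m => ⟨t.1, mrTp (Q t.1) t.2 m⟩

/-- Extraction for ∀∃-formulae, primed version. -/
theorem mr'_extraction (A B : Type) (P : A → B → SP)
    (r : Cr' (SP.all A (fun x => SP.ex B (fun y => P x y))))
    (h : Nonempty (MR' (SP.all A (fun x => SP.ex B (fun y => P x y))) r)) :
    ∃ f : A → B, ∀ x : A, Nonempty (Tp (P x (f x))) := by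
  obtain ⟨m⟩ := h
  exact ⟨fun x => (exWit (r x) (m x)).1, fun x => ⟨(exWit (r x) (m x)).2⟩⟩
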